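/- The category W of W-semigroups and W-morphisms is cocomplete: every functor from a small category to W has a colimit. -/

import Mathlib

/-!
STATEMENT 6: The category W of W-semigroups and W-morphisms is cocomplete:
every functor from a small category to W has a colimit.
-/

universe u v w

/-- The axioms of a `W`-semigroup: a commutative monoid with a transitive
auxiliary relation `≺` satisfying `0 ≺ x`, (W1), (W3) and (W4). -/
structure WAxioms (M : Type u) [AddCommMonoid M] (r : M → M → Prop) : Prop where
  trans : ∀ {x y z : M}, r x y → r y z → r x z
  zero_rel : ∀ x : M, r 0 x
  W1 : ∀ x : M, ∃ s : ℕ → M, (∀ n, r (s n) (s (n + 1))) ∧ (∀ n, r (s n) x) ∧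
        ∀ y : M, r y x → ∃ n, r y (s n)
  W3 : ∀ {x' x y' y : M}, r x' x → r y' y → r (x' + y') (x + y)
  W4 : ∀ {x y z : M}, r x (y + z) → ∃ y' z' : M, r y' y ∧ r z' z ∧ r x (y' + z')

/-- A `W`-morphism: preserves addition, `0` and the auxiliary relation, and is
continuous: whenever `y ≺ f x` there is `x' ≺ x` with `y ≺ f x'`. -/
structure IsWHom {M : Type u} {N : Type v} [AddCommMonoid M] [AddCommMonoid N]
    (rM : M → M → Prop) (rN : N → N → Prop) (f : M → N) : Prop where
  map_zero : f 0 = 0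
  map_add : ∀ x y : M, f (x + y) = f x + f y
  map_rel : ∀ {x y : M}, rM x y → rN (f x) (f y)
  cont : ∀ (x : M) (y : N), rN y (f x) → ∃ x' : M, rM x' x ∧ rN y (f x')

theorem WAxioms.transitive {M : Type u} [AddCommMonoid M] {r : M → M → Prop}
    (h : WAxioms M r) : Transitive r := fun _ _ _ hxy hyz => h.trans hxy hyz

theorem isWHom_id {M : Type u} [AddCommMonoid M] {r : M → M → Prop} (h : WAxioms M r) :
    IsWHom r r (id : M → M) := by
  refine ⟨rfl, fun _ _ => rfl, fun hxy => hxy, ?_⟩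
  intro x y hyx
  obtain ⟨s, _, hsx, hcof⟩ := h.W1 x
  obtain ⟨n, hn⟩ := hcof y hyx
  exact ⟨s n, hsx n, hn⟩

theorem IsWHom.comp {M : Type u} {N : Type v} {P : Type w} [AddCommMonoid M]
    [AddCommMonoid N] [AddCommMonoid P] {rM : M → M → Prop} {rN : N → N → Prop}
    {rP : P → P → Prop} (hP : Transitive rP) {g : N → P} {f : M → N}
    (hg : IsWHom rN rP g) (hf : IsWHom rM rN f) : IsWHom rM rP (g ∘ f) := by
  refine ⟨?_, ?_, ?_, ?_⟩
  · show g (f 0) = 0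
    rw [hf.map_zero, hg.map_zero]
  · intro x y
    show g (f (x + y)) = g (f x) + g (f y)
    rw [hf.map_add, hg.map_add]
  · exact fun hxy => hg.map_rel (hf.map_rel hxy)
  · intro x y hy
    obtain ⟨u, hu, hyu⟩ := hg.cont (f x) y hy
    obtain ⟨x', hx', hux'⟩ := hf.cont x u hu
    exact ⟨x', hx', hP hyu (hg.map_rel hux')⟩

/-- The category `W` of `W`-semigroups: objects are `W`-semigroups, morphisms are
`W`-morphisms. -/
structure WCat : Type (u + 1) where
  carrier : Type u
  [addCommMonoid : AddCommMonoid carrier]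
  rel : carrier → carrier → Prop
  ax : WAxioms carrier rel

attribute [instance] WCat.addCommMonoid

instance : CategoryTheory.Category WCat.{u} where
  Hom S T := { f : S.carrier → T.carrier // IsWHom S.rel T.rel f }
  id S := ⟨id, isWHom_id S.ax⟩
  comp := fun {X Y Z} f g =>
    ⟨g.1 ∘ f.1, g.2.comp Z.ax.transitive f.2⟩

open CategoryTheory

/-!
`W` has coproducts and coequalizers. The coproduct of a family is its direct sum `Π₀ i, S i`
with the componentwise relation; because of the finite support, approximating sequences and
(W4)-splittings have to be chosen to vanish where the element vanishes.

The coequalizer of `f, g : X ⟶ Y` is the quotient of `Y` by the additive congruence generated by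
`f x ~ g x`, ordered by the transitive closure of the image of `≺`. The crux is that this
congruence can be tracked: if `w ~ v` and `m ≺ w`, there is `t ≺ v` with `[m] ≺ [t]`. This holds
on the generators by continuity of `f` and `g`, and survives sums by (W4). Consequently anything
below a class `[b]` lies below `[t]` for some `t ≺ b`, which yields (W1), (W4) and the continuity
of the projection.
-/

open Limits Relation

namespace WAxioms

variable {M : Type*} [AddCommMonoid M] {r : M → M → Prop}

theorem exists_between (h : WAxioms M r) {a b : M} (hab : r a b) : ∃ m, r a m ∧ r m b := by
  obtain ⟨s, -, hsb, hcof⟩ := h.W1 b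
  obtain ⟨n, hn⟩ := hcof a hab
  exact ⟨s n, hn, hsb n⟩

theorem rel_of_rel_seq (h : WAxioms M r) {s : ℕ → M} (hs : ∀ n, r (s n) (s (n + 1))) {z : M}
    {m n : ℕ} (hmn : m ≤ n) (hz : r z (s m)) : r z (s n) := by
  induction hmn with
  | refl => exact hz
  | step _ ih => exact h.trans ih (hs _)

theorem exists_seq_zero (h : WAxioms M r) :
    ∃ s : M → ℕ → M, s 0 = 0 ∧ ∀ x, (∀ n, r (s x n) (s x (n + 1))) ∧ (∀ n, r (s x n) x) ∧
      ∀ y, r y x → ∃ n, r y (s x n) := by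
  classical
  choose s hs using h.W1
  refine ⟨fun x => if x = 0 then 0 else s x, by simp, fun x => ?_⟩
  by_cases hx : x = 0
  · subst hx
    simp only [↓reduceIte, Pi.zero_apply]
    exact ⟨fun _ => h.zero_rel 0, fun _ => h.zero_rel 0, fun y hy => ⟨0, hy⟩⟩
  · simpa only [hx, if_false] using hs x

theorem W4_preserving_zero (h : WAxioms M r) {x y z : M} (hx : r x (y + z)) :
    ∃ y' z', r y' y ∧ r z' z ∧ r x (y' + z') ∧ (y = 0 → y' = 0) ∧ (z = 0 → z' = 0) := by
  rcases eq_or_ne y 0 with rfl | hy <;> rcases eq_or_ne z 0 with rfl | hz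
  · exact ⟨0, 0, h.zero_rel 0, h.zero_rel 0, hx, fun _ => rfl, fun _ => rfl⟩
  · rw [zero_add] at hx
    obtain ⟨m, hxm, hmz⟩ := h.exists_between hx
    exact ⟨0, m, h.zero_rel 0, hmz, by rwa [zero_add], fun _ => rfl, (absurd · hz)⟩
  · rw [add_zero] at hx
    obtain ⟨m, hxm, hmy⟩ := h.exists_between hx
    exact ⟨m, 0, hmy, h.zero_rel 0, by rwa [add_zero], (absurd · hy), fun _ => rfl⟩
  · obtain ⟨y', z', hy', hz', hx'⟩ := h.W4 hx
    exact ⟨y', z', hy', hz', hx', (absurd · hy), (absurd · hz)⟩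

theorem rel_sum (h : WAxioms M r) {ι : Type*} (t : Finset ι) {u v : ι → M}
    (huv : ∀ i ∈ t, r (u i) (v i)) : r (∑ i ∈ t, u i) (∑ i ∈ t, v i) := by
  classical
  induction t using Finset.induction_on with
  | empty => simpa using h.zero_rel 0
  | insert j t hj ih =>
    rw [Finset.sum_insert hj, Finset.sum_insert hj]
    exact h.W3 (huv j (Finset.mem_insert_self j t))
      (ih fun i hi => huv i (Finset.mem_insert_of_mem hi))

theorem exists_rel_sum_of_rel_sum (h : WAxioms M r) {ι : Type*} (t : Finset ι) {u : ι → M}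
    {y : M} (hy : r y (∑ i ∈ t, u i)) :
    ∃ u' : ι → M, (∀ i ∈ t, r (u' i) (u i)) ∧ r y (∑ i ∈ t, u' i) := by
  classical
  induction t using Finset.induction_on generalizing y with
  | empty => exact ⟨u, by simp, hy⟩
  | insert j t hj ih =>
    rw [Finset.sum_insert hj] at hy
    obtain ⟨a, b, ha, hb, hyab⟩ := h.W4 hy
    obtain ⟨a', haa', ha'⟩ := h.exists_between ha
    obtain ⟨u', hu', hbu'⟩ := ih hb
    refine ⟨Function.update u' j a', fun i hi => ?_, ?_⟩
    · rcases eq_or_ne i j with rfl | hij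
      · simpa using ha'
      · simpa [hij] using hu' i ((Finset.mem_insert.1 hi).resolve_left hij)
    · rw [Finset.sum_insert hj, Function.update_self, Finset.sum_update_of_notMem hj]
      exact h.trans hyab (h.W3 haa' hbu')

end WAxioms

def IsWHom.toAddMonoidHom {M N : Type*} [AddCommMonoid M] [AddCommMonoid N]
    {rM : M → M → Prop} {rN : N → N → Prop} {f : M → N} (hf : IsWHom rM rN f) : M →+ N where
  toFun := f
  map_zero' := hf.map_zero
  map_add' := hf.map_add

theorem DFinsupp.exists_coe_eq {ι : Type*} {β : ι → Type*} [∀ i, Zero (β i)] (a : Π₀ i, β i)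
    {g : ∀ i, β i} (hg : ∀ i, a i = 0 → g i = 0) : ∃ b : Π₀ i, β i, ⇑b = g :=
  ⟨⟨g, a.support'.map fun s => ⟨s.1, fun i => (s.2 i).imp_right (hg i)⟩⟩, rfl⟩

theorem Relation.TransGen.add {α : Type*} [Add α] {R : α → α → Prop}
    (hadd : ∀ {a b c d}, R a b → R c d → R (a + c) (b + d))
    (hdense : ∀ {a b}, R a b → ∃ m, R a m ∧ R m b) {a b c d : α} (hab : TransGen R a b)
    (hcd : TransGen R c d) : TransGen R (a + c) (b + d) := by
  have add_single {a b c d} (hab : TransGen R a b) (hcd : R c d) :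
      TransGen R (a + c) (b + d) := by
    induction hab generalizing c d with
    | single h => exact .single (hadd h hcd)
    | tail _ hbe ih =>
      obtain ⟨m, hcm, hmd⟩ := hdense hcd
      exact .tail (ih hcm) (hadd hbe hmd)
  have split_last {a b} (hab : TransGen R a b) : ∃ m, TransGen R a m ∧ R m b := by
    cases hab with
    | single h =>
      obtain ⟨m, ham, hmb⟩ := hdense h
      exact ⟨m, .single ham, hmb⟩
    | tail h hb => exact ⟨_, h, hb⟩
  induction hcd generalizing a b with
  | single h => exact add_single hab h
  | tail _ hed ih =>
    obtain ⟨m, ham, hmb⟩ := split_last hab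
    exact .tail (ih ham) (hadd hmb hed)

section Coproduct

variable {ι : Type*} {S : ι → Type*} [∀ i, AddCommMonoid (S i)] {r : ∀ i, S i → S i → Prop}

def dfinsuppRel (r : ∀ i, S i → S i → Prop) (a b : Π₀ i, S i) : Prop :=
  ∀ i, r i (a i) (b i)

theorem wAxioms_dfinsupp (ax : ∀ i, WAxioms (S i) (r i)) :
    WAxioms (Π₀ i, S i) (dfinsuppRel r) where
  trans hxy hyz i := (ax i).trans (hxy i) (hyz i)
  zero_rel x i := (ax i).zero_rel (x i)
  W1 x := by
    classical
    choose s hs0 hs using fun i => (ax i).exists_seq_zero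
    refine ⟨fun n => x.mapRange (fun i v => s i v n) (fun i => congrFun (hs0 i) n),
      fun n i => ?_, fun n i => ?_, fun y hy => ?_⟩
    · simpa using (hs i (x i)).1 n
    · simpa using (hs i (x i)).2.1 n
    · choose N hN using fun i => (hs i (x i)).2.2 (y i) (hy i)
      refine ⟨y.support.sup N, fun i => ?_⟩
      rw [DFinsupp.mapRange_apply]
      by_cases hyi : y i = 0
      · rw [hyi]
        exact (ax i).zero_rel _
      · exact (ax i).rel_of_rel_seq (hs i (x i)).1
          (Finset.le_sup (DFinsupp.mem_support_iff.2 hyi)) (hN i)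
  W3 hx hy i := by simpa using (ax i).W3 (hx i) (hy i)
  W4 {x y z} hx := by
    have hx i : r i (x i) (y i + z i) := by simpa using hx i
    choose y' z' hy' hz' hx' hy0 hz0 using fun i => (ax i).W4_preserving_zero (hx i)
    obtain ⟨b, rfl⟩ := y.exists_coe_eq hy0
    obtain ⟨c, rfl⟩ := z.exists_coe_eq hz0
    exact ⟨b, c, hy', hz', fun i => by simpa using hx' i⟩

theorem isWHom_single [DecidableEq ι] (ax : ∀ i, WAxioms (S i) (r i)) (i : ι) :
    IsWHom (r i) (dfinsuppRel r) (DFinsupp.single i) where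
  map_zero := DFinsupp.single_zero i
  map_add := DFinsupp.single_add i
  map_rel hxy j := by
    rcases eq_or_ne j i with rfl | hji
    · simpa using hxy
    · simpa [DFinsupp.single_eq_of_ne hji] using (ax j).zero_rel 0
  cont x y hy := by
    obtain ⟨m, hym, hmx⟩ := (ax i).exists_between (by simpa using hy i)
    refine ⟨m, hmx, fun j => ?_⟩
    rcases eq_or_ne j i with rfl | hji
    · simpa using hym
    · simpa [DFinsupp.single_eq_of_ne hji] using hy j

theorem isWHom_sumAddHom [DecidableEq ι] (ax : ∀ i, WAxioms (S i) (r i)) {N : Type*}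
    [AddCommMonoid N] {rN : N → N → Prop} (hN : WAxioms N rN) {g : ∀ i, S i → N}
    (hg : ∀ i, IsWHom (r i) rN (g i)) :
    IsWHom (dfinsuppRel r) rN (DFinsupp.sumAddHom fun i => (hg i).toAddMonoidHom) := by
  classical
  have hsum (a : Π₀ i, S i) (t : Finset ι) (ht : a.support ⊆ t) :
      DFinsupp.sumAddHom (fun i => (hg i).toAddMonoidHom) a = ∑ i ∈ t, g i (a i) := by
    rw [DFinsupp.sumAddHom_apply]
    exact DFinsupp.sum_of_support_subset ht fun i _ => (hg i).map_zero
  refine ⟨map_zero _, map_add _, fun {a b} hab => ?_, fun a y hy => ?_⟩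
  · rw [hsum a (a.support ∪ b.support) Finset.subset_union_left,
      hsum b (a.support ∪ b.support) Finset.subset_union_right]
    exact hN.rel_sum _ fun i _ => (hg i).map_rel (hab i)
  · rw [hsum a a.support subset_rfl] at hy
    obtain ⟨u, hu, hyu⟩ := hN.exists_rel_sum_of_rel_sum _ hy
    have hlift (i : ι) :
        ∃ x, r i x (a i) ∧ (a i = 0 → x = 0) ∧ (a i ≠ 0 → rN (u i) (g i x)) := by
      by_cases hai : a i = 0
      · exact ⟨0, hai ▸ (ax i).zero_rel 0, fun _ => rfl, (absurd hai ·)⟩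
      · obtain ⟨x, hxa, hux⟩ := (hg i).cont (a i) (u i) (hu i (DFinsupp.mem_support_iff.2 hai))
        exact ⟨x, hxa, (absurd · hai), fun _ => hux⟩
    choose x hxa hx0 hux using hlift
    obtain ⟨b, rfl⟩ := a.exists_coe_eq hx0
    have hb : b.support ⊆ a.support := fun i hi =>
      DFinsupp.mem_support_iff.2 fun hai => DFinsupp.mem_support_iff.1 hi (hx0 i hai)
    refine ⟨b, hxa, ?_⟩
    rw [hsum b a.support hb]
    exact hN.trans hyu (hN.rel_sum _ fun i hi => hux i (DFinsupp.mem_support_iff.1 hi))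

end Coproduct

abbrev coprodObj {ι : Type u} (X : ι → WCat.{u}) : WCat.{u} :=
  ⟨Π₀ i, (X i).carrier, dfinsuppRel fun i => (X i).rel, wAxioms_dfinsupp fun i => (X i).ax⟩

open scoped Classical in
noncomputable def coprodCofan {ι : Type u} (X : ι → WCat.{u}) : Cofan X :=
  Cofan.mk (coprodObj X) fun i =>
    ⟨DFinsupp.single (β := fun i => (X i).carrier) i, isWHom_single (fun i => (X i).ax) i⟩

open scoped Classical in
noncomputable def coprodCofanIsColimit {ι : Type u} (X : ι → WCat.{u}) :
    IsColimit (coprodCofan X) :=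
  Cofan.IsColimit.mk _
    (fun s => ⟨DFinsupp.sumAddHom (β := fun i => (X i).carrier)
        fun i => (s.inj i).2.toAddMonoidHom,
      isWHom_sumAddHom (fun i => (X i).ax) s.pt.ax fun i => (s.inj i).2⟩)
    (fun _ i => Subtype.ext (funext fun x =>
      DFinsupp.sumAddHom_single (β := fun i => (X i).carrier) _ i x))
    (fun s m hm => Subtype.ext <| congrArg DFunLike.coe <| DFinsupp.addHom_ext
      (f := (m.2.toAddMonoidHom : (Π₀ i, (X i).carrier) →+ s.pt.carrier)) fun i x =>
        (congrFun (congrArg Subtype.val (hm i)) x).trans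
          (DFinsupp.sumAddHom_single (fun i => (s.inj i).2.toAddMonoidHom) i x).symm)

section Quotient

variable {M : Type*} [AddCommMonoid M] {r : M → M → Prop}

def quotRel (c : AddCon M) (r : M → M → Prop) : c.Quotient → c.Quotient → Prop :=
  TransGen (Relation.Map r (↑) (↑))

def Tracks (c : AddCon M) (r : M → M → Prop) (w v : M) : Prop :=
  ∀ m, r m w → ∃ t, r t v ∧ quotRel c r m t

variable {c : AddCon M}

theorem quotRel_coe {a b : M} (hab : r a b) : quotRel c r a b :=
  .single ⟨a, b, hab, rfl, rfl⟩

theorem quotRel_add (h : WAxioms M r) {p q p' q' : c.Quotient} (hpq : quotRel c r p q)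
    (hpq' : quotRel c r p' q') : quotRel c r (p + p') (q + q') := by
  refine TransGen.add ?_ ?_ hpq hpq'
  · rintro _ _ _ _ ⟨a, b, hab, rfl, rfl⟩ ⟨a', b', hab', rfl, rfl⟩
    exact ⟨a + a', b + b', h.W3 hab hab', AddCon.coe_add a a', AddCon.coe_add b b'⟩
  · rintro _ _ ⟨a, b, hab, rfl, rfl⟩
    obtain ⟨m, ham, hmb⟩ := h.exists_between hab
    exact ⟨m, ⟨a, m, ham, rfl, rfl⟩, ⟨m, b, hmb, rfl, rfl⟩⟩

theorem tracks_refl (h : WAxioms M r) (w : M) : Tracks c r w w := fun m hm => by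
  obtain ⟨t, hmt, htw⟩ := h.exists_between hm
  exact ⟨t, htw, quotRel_coe hmt⟩

theorem Tracks.trans {u v w : M} (huv : Tracks c r u v) (hvw : Tracks c r v w) :
    Tracks c r u w := fun m hm => by
  obtain ⟨t, htv, hmt⟩ := huv m hm
  obtain ⟨t', ht'w, htt'⟩ := hvw t htv
  exact ⟨t', ht'w, hmt.trans htt'⟩

theorem Tracks.add (h : WAxioms M r) {w v w' v' : M} (hwv : Tracks c r w v)
    (hwv' : Tracks c r w' v') : Tracks c r (w + w') (v + v') := fun m hm => by
  obtain ⟨a, a', ha, ha', hm⟩ := h.W4 hm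
  obtain ⟨t, htv, hat⟩ := hwv a ha
  obtain ⟨t', ht'v', hat'⟩ := hwv' a' ha'
  refine ⟨t + t', h.W3 htv ht'v', (quotRel_coe hm).trans ?_⟩
  rw [AddCon.coe_add, AddCon.coe_add]
  exact quotRel_add h hat hat'

theorem tracks_of_addConGen (h : WAxioms M r) {ρ : M → M → Prop}
    (hρ : ∀ a b, ρ a b → Tracks (addConGen ρ) r a b ∧ Tracks (addConGen ρ) r b a) {a b : M}
    (hab : addConGen ρ a b) : Tracks (addConGen ρ) r a b := by
  suffices Tracks (addConGen ρ) r a b ∧ Tracks (addConGen ρ) r b a from this.1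
  induction (hab : AddConGen.Rel ρ a b) with
  | of a b hab => exact hρ a b hab
  | refl a => exact ⟨tracks_refl h a, tracks_refl h a⟩
  | symm _ ih => exact ih.symm
  | trans _ _ ih ih' => exact ⟨ih.1.trans ih'.1, ih'.2.trans ih.2⟩
  | add _ _ ih ih' => exact ⟨ih.1.add h ih'.1, ih.2.add h ih'.2⟩

theorem tracks_of_isWHom {X : Type*} [AddCommMonoid X] {rX : X → X → Prop} {f g : X → M}
    (hf : IsWHom rX r f) (hg : IsWHom rX r g) (hfg : ∀ x, c (f x) (g x)) (x : X) :
    Tracks c r (f x) (g x) := fun m hm => by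
  obtain ⟨x', hx'x, hm⟩ := hf.cont x m hm
  exact ⟨g x', hg.map_rel hx'x, .single ⟨m, f x', hm, rfl, (AddCon.eq c).2 (hfg x')⟩⟩

theorem isWHom_lift {N : Type*} [AddCommMonoid N] {rN : N → N → Prop} (hN : WAxioms N rN)
    {g : M → N} (hg : IsWHom r rN g) (hle : c ≤ AddCon.ker hg.toAddMonoidHom) :
    IsWHom (quotRel c r) rN (c.lift hg.toAddMonoidHom hle) where
  map_zero := map_zero _
  map_add := map_add _
  map_rel {p q} hpq := by
    have step {p q} (hpq : Relation.Map r (↑) (↑) p q) :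
        rN (c.lift hg.toAddMonoidHom hle p) (c.lift hg.toAddMonoidHom hle q) := by
      obtain ⟨a, b, hab, rfl, rfl⟩ := hpq
      exact hg.map_rel hab
    induction hpq with
    | single hpq => exact step hpq
    | tail _ hqr ih => exact hN.trans ih (step hqr)
  cont p y hy := by
    induction p using c.induction_on with | H a =>
    obtain ⟨a', ha'a, hy⟩ := hg.cont a y hy
    exact ⟨a', quotRel_coe ha'a, hy⟩

variable (hc : ∀ a b, c a b → Tracks c r a b)
include hc

theorem exists_rel_of_quotRel {p : c.Quotient} {b : M} (hpb : quotRel c r p b) :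
    ∃ t, r t b ∧ quotRel c r p t := by
  obtain ⟨_, hpz, a, b', hab', rfl, hb'⟩ := TransGen.tail'_iff.1 hpb
  obtain ⟨t, htb, hat⟩ := hc b' b ((AddCon.eq c).1 hb') a hab'
  exact ⟨t, htb, TransGen.trans_right hpz hat⟩

variable (h : WAxioms M r)
include h

theorem wAxioms_quotient : WAxioms c.Quotient (quotRel c r) where
  trans := TransGen.trans
  zero_rel p := c.induction_on p fun b => by
    simpa only [AddCon.coe_zero] using quotRel_coe (c := c) (h.zero_rel b)
  W1 p := c.induction_on p fun b => by
    obtain ⟨s, hs, hsb, hcof⟩ := h.W1 b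
    refine ⟨fun n => s n, fun n => quotRel_coe (hs n), fun n => quotRel_coe (hsb n),
      fun y hy => ?_⟩
    obtain ⟨t, htb, hyt⟩ := exists_rel_of_quotRel hc hy
    obtain ⟨n, htn⟩ := hcof t htb
    exact ⟨n, hyt.trans (quotRel_coe htn)⟩
  W3 := quotRel_add h
  W4 {p q₁ q₂} hp := by
    induction q₁ using c.induction_on with | H b₁ =>
    induction q₂ using c.induction_on with | H b₂ =>
    rw [← AddCon.coe_add] at hp
    obtain ⟨t, htb, hpt⟩ := exists_rel_of_quotRel hc hp
    obtain ⟨b₁', b₂', hb₁, hb₂, htb'⟩ := h.W4 htb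
    refine ⟨b₁', b₂', quotRel_coe hb₁, quotRel_coe hb₂, ?_⟩
    rw [← AddCon.coe_add]
    exact hpt.trans (quotRel_coe htb')

theorem isWHom_coe : IsWHom r (quotRel c r) ((↑) : M → c.Quotient) where
  map_zero := AddCon.coe_zero
  map_add := AddCon.coe_add
  map_rel := quotRel_coe
  cont x y hy := by
    obtain ⟨t, htx, hyt⟩ := exists_rel_of_quotRel hc hy
    obtain ⟨x', htx', hx'x⟩ := h.exists_between htx
    exact ⟨x', hx'x, hyt.trans (quotRel_coe htx')⟩

end Quotient

section Coequalizer

variable {X Y : WCat.{u}} (f g : X ⟶ Y)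

def coeqCon : AddCon Y.carrier :=
  addConGen fun a b => ∃ x, f.1 x = a ∧ g.1 x = b

theorem coeqCon_apply (x : X.carrier) : coeqCon f g (f.1 x) (g.1 x) :=
  AddConGen.Rel.of _ _ ⟨x, rfl, rfl⟩

theorem tracks_coeqCon {a b : Y.carrier} (hab : coeqCon f g a b) :
    Tracks (coeqCon f g) Y.rel a b := by
  refine tracks_of_addConGen Y.ax ?_ hab
  rintro _ _ ⟨x, rfl, rfl⟩
  exact ⟨tracks_of_isWHom f.2 g.2 (coeqCon_apply f g) x,
    tracks_of_isWHom g.2 f.2 (fun x => (coeqCon_apply f g x).symm) x⟩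

abbrev coequalizerObj : WCat.{u} :=
  ⟨(coeqCon f g).Quotient, quotRel (coeqCon f g) Y.rel,
    wAxioms_quotient (fun _ _ => tracks_coeqCon f g) Y.ax⟩

def coequalizerCofork : Cofork f g :=
  Cofork.ofπ (P := coequalizerObj f g) ⟨(↑), isWHom_coe (fun _ _ => tracks_coeqCon f g) Y.ax⟩
    (Subtype.ext (funext fun x => (AddCon.eq _).2 (coeqCon_apply f g x)))

def coequalizerCoforkIsColimit : IsColimit (coequalizerCofork f g) :=
  Cofork.IsColimit.mk _
    (fun s => ⟨_, isWHom_lift s.pt.ax s.π.2 (AddCon.addConGen_le.2 <| by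
      rintro _ _ ⟨x, rfl, rfl⟩
      exact congrFun (congrArg Subtype.val s.condition) x)⟩)
    (fun _ => rfl)
    (fun s m hm => Subtype.ext (funext fun p => by
      induction p using (coeqCon f g).induction_on with | H a =>
      exact congrFun (congrArg Subtype.val hm) a))

instance : HasColimit (parallelPair f g) :=
  ⟨⟨⟨_, coequalizerCoforkIsColimit f g⟩⟩⟩

end Coequalizer

/-- **The category W is cocomplete.** -/
theorem w_cocomplete :
    ∀ (I : Type u) (_ : SmallCategory I) (F : I ⥤ WCat.{u}), Limits.HasColimit F := by
  intro I _ F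
  have : HasCoproducts.{u} WCat.{u} :=
    hasCoproducts_of_colimit_cofans coprodCofan coprodCofanIsColimit
  have : HasCoequalizers WCat.{u} := hasCoequalizers_of_hasColimit_parallelPair _
  have : HasColimitsOfSize.{u, u} WCat.{u} := has_colimits_of_hasCoequalizers_and_coproducts
  infer_instance
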